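/- Fix i with 2 ≤ i ≤ n. Let v = s_2 ∘ s_3 ∘ ⋯ ∘ s_n ∘ s_1 ∘ s_2 ∘ ⋯ ∘ s_{n−1} (rightmost factor applied first), let u be an element of the subgroup of the orthogonal group of ℝ^n generated by {s_j : j ≠ 2} with u(α_j) a negative root for every j ≠ 2, and let u_i be an element of the subgroup generated by {s_j : j ∉ {2, i}} with u_i(α_j) a negative root for every j ∉ {2, i} (u and u_i are the longest elements of the corresponding parabolic Weyl groups). Set w_i = u_i ∘ u ∘ v. Then w_i(α_n) is a positive root and is not a simple root. -/

import Mathlib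

open scoped InnerProductSpace

private lemma sRefl_invol {V : Type*} [NormedAddCommGroup V] [InnerProductSpace ℝ V]
    (b x : V) :
    (x - (2 * ⟪x, b⟫_ℝ / ⟪b, b⟫_ℝ) • b) -
      (2 * ⟪x - (2 * ⟪x, b⟫_ℝ / ⟪b, b⟫_ℝ) • b, b⟫_ℝ / ⟪b, b⟫_ℝ) • b = x := by
  by_cases hb : b = 0
  · simp [hb]
  · have h : ⟪b, b⟫_ℝ ≠ 0 := fun h => hb (inner_self_eq_zero.mp h)
    have key : 2 * ⟪x - (2 * ⟪x, b⟫_ℝ / ⟪b, b⟫_ℝ) • b, b⟫_ℝ / ⟪b, b⟫_ℝ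
        = -(2 * ⟪x, b⟫_ℝ / ⟪b, b⟫_ℝ) := by
      rw [inner_sub_left, real_inner_smul_left]
      field_simp
      ring
    rw [key, neg_smul, sub_neg_eq_add, sub_add_cancel]

/-- The reflection `s_b : x ↦ x - (2⟪x,b⟫/⟪b,b⟫) • b`, as a permutation of `V`. -/
noncomputable def sRefl {V : Type*} [NormedAddCommGroup V] [InnerProductSpace ℝ V]
    (b : V) : Equiv.Perm V where
  toFun x := x - (2 * ⟪x, b⟫_ℝ / ⟪b, b⟫_ℝ) • b
  invFun x := x - (2 * ⟪x, b⟫_ℝ / ⟪b, b⟫_ℝ) • b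
  left_inv x := sRefl_invol b x
  right_inv x := sRefl_invol b x

/-- `E n i` is the `i`-th standard basis vector of `ℝ^n` (for indices `1 ≤ i ≤ n`). -/
noncomputable def E (n i : ℕ) : EuclideanSpace ℝ (Fin n) :=
  if h : 1 ≤ i ∧ i ≤ n then EuclideanSpace.single (⟨i - 1, by omega⟩ : Fin n) 1 else 0

/-- The simple roots of type `Bₙ` (indexed by `1 ≤ i ≤ n`):
`αᵢ = eᵢ - eᵢ₊₁` for `i ≤ n - 1` and `αₙ = eₙ`. -/
noncomputable def alphaB (n i : ℕ) : EuclideanSpace ℝ (Fin n) :=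
  if i = n then E n n else E n i - E n (i + 1)

/-- The roots of type `Bₙ`: `±eᵢ ± eⱼ` (`1 ≤ i < j ≤ n`) and `±eᵢ` (`1 ≤ i ≤ n`). -/
def RootB (n : ℕ) : Set (EuclideanSpace ℝ (Fin n)) :=
  {x | (∃ i j, 1 ≤ i ∧ i < j ∧ j ≤ n ∧
      (x = E n i + E n j ∨ x = -(E n i + E n j) ∨ x = E n i - E n j ∨ x = E n j - E n i)) ∨
    (∃ i, 1 ≤ i ∧ i ≤ n ∧ (x = E n i ∨ x = -E n i))}

/-- A positive root of type `Bₙ`: a root which is a nonnegative integer combination of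
the simple roots. -/
def IsPosB (n : ℕ) (x : EuclideanSpace ℝ (Fin n)) : Prop :=
  x ∈ RootB n ∧ ∃ c : ℕ → ℕ, x = ∑ i ∈ Finset.Icc 1 n, (c i : ℝ) • alphaB n i

/-- A negative root of type `Bₙ`: the negative of a positive root. -/
def IsNegB (n : ℕ) (x : EuclideanSpace ℝ (Fin n)) : Prop :=
  IsPosB n (-x)

/-- The simple reflections `sᵢ = s_{αᵢ}` of type `Bₙ`. -/
noncomputable def sB (n i : ℕ) : Equiv.Perm (EuclideanSpace ℝ (Fin n)) :=
  sRefl (alphaB n i)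

/-- `v = s₂ ∘ s₃ ∘ ⋯ ∘ sₙ ∘ s₁ ∘ s₂ ∘ ⋯ ∘ sₙ₋₁` (rightmost factor applied first);
recall that in `Equiv.Perm` the product `f * g` is the composition `f ∘ g`. -/
noncomputable def vB (n : ℕ) : Equiv.Perm (EuclideanSpace ℝ (Fin n)) :=
  (((List.range (n - 1)).map fun k => sB n (k + 2)) ++
    ((List.range (n - 1)).map fun k => sB n (k + 1))).prod


section Aux

open scoped InnerProductSpace

private lemma sRefl_apply {V : Type*} [NormedAddCommGroup V] [InnerProductSpace ℝ V]
    (b x : V) : sRefl b x = x - (2 * ⟪x, b⟫_ℝ / ⟪b, b⟫_ℝ) • b := rfl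

private lemma sRefl_sub {V : Type*} [NormedAddCommGroup V] [InnerProductSpace ℝ V]
    (b x y : V) : sRefl b (x - y) = sRefl b x - sRefl b y := by
  rw [sRefl_apply, sRefl_apply, sRefl_apply, inner_sub_left,
    div_eq_mul_inv, div_eq_mul_inv, div_eq_mul_inv]
  module

private lemma sRefl_fix {V : Type*} [NormedAddCommGroup V] [InnerProductSpace ℝ V]
    {b x : V} (h : ⟪x, b⟫_ℝ = 0) : sRefl b x = x := by
  rw [sRefl_apply, h]
  simp

private lemma E_inner {n i j : ℕ} (hi1 : 1 ≤ i) (hi2 : i ≤ n) (hj1 : 1 ≤ j) (hj2 : j ≤ n) :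
    ⟪E n i, E n j⟫_ℝ = if i = j then 1 else 0 := by
  rw [E, E, dif_pos (⟨hi1, hi2⟩ : 1 ≤ i ∧ i ≤ n), dif_pos (⟨hj1, hj2⟩ : 1 ≤ j ∧ j ≤ n),
    EuclideanSpace.inner_single_left, EuclideanSpace.single_apply]
  simp only [map_one, one_mul, Fin.mk.injEq]
  by_cases h : i = j
  · rw [if_pos (by omega), if_pos h]
  · rw [if_neg (by omega), if_neg h]

private lemma inner_E_alphaB {n k j : ℕ} (hk1 : 1 ≤ k) (hk2 : k ≤ n) (hj1 : 1 ≤ j)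
    (hj2 : j ≤ n) :
    ⟪E n k, alphaB n j⟫_ℝ =
      if j = n then (if k = n then 1 else 0)
      else (if k = j then 1 else 0) - (if k = j + 1 then 1 else 0) := by
  rw [alphaB]
  by_cases h : j = n
  · rw [if_pos h, if_pos h, E_inner hk1 hk2 (by omega) (le_refl n)]
  · rw [if_neg h, if_neg h, inner_sub_right, E_inner hk1 hk2 hj1 hj2,
      E_inner hk1 hk2 (by omega) (by omega)]

private lemma alphaB_inner_self {n j : ℕ} (hj1 : 1 ≤ j) (hj2 : j ≤ n) :
    ⟪alphaB n j, alphaB n j⟫_ℝ = if j = n then 1 else 2 := by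
  by_cases h : j = n
  · rw [alphaB, if_pos h, if_pos h, E_inner (by omega) le_rfl (by omega) le_rfl, if_pos rfl]
  · rw [alphaB, if_neg h, if_neg h, inner_sub_left, inner_sub_right, inner_sub_right,
      E_inner hj1 hj2 hj1 hj2, E_inner hj1 hj2 (by omega) (by omega),
      E_inner (by omega) (by omega) hj1 hj2, E_inner (by omega) (by omega) (by omega) (by omega),
      if_pos rfl, if_neg (by omega), if_neg (by omega), if_pos rfl]
    norm_num

private lemma sB_step {n j : ℕ} (hj1 : 1 ≤ j) (hj2 : j + 1 ≤ n) :
    sB n j (E n (j + 1)) = E n j := by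
  have hji : ⟪E n (j + 1), alphaB n j⟫_ℝ = -1 := by
    rw [inner_E_alphaB (by omega) hj2 hj1 (by omega), if_neg (by omega), if_neg (by omega),
      if_pos rfl]
    norm_num
  have hjj : ⟪alphaB n j, alphaB n j⟫_ℝ = 2 := by
    rw [alphaB_inner_self hj1 (by omega), if_neg (by omega)]
  rw [sB, sRefl_apply, hji, hjj, alphaB, if_neg (by omega)]
  have h2 : (2 * (-1 : ℝ) / 2) = -1 := by norm_num
  rw [h2]
  module

private lemma sB_fix_E1 {n j : ℕ} (hn : 2 ≤ n) (hj1 : 2 ≤ j) (hj2 : j ≤ n) :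
    sB n j (E n 1) = E n 1 := by
  apply sRefl_fix
  rw [inner_E_alphaB (by omega) (by omega) (by omega) hj2]
  by_cases h : j = n
  · rw [if_pos h, if_neg (by omega)]
  · rw [if_neg h, if_neg (by omega), if_neg (by omega)]
    norm_num

private lemma sB_fix_E2 {n j : ℕ} (hj1 : 3 ≤ j) (hj2 : j ≤ n) :
    sB n j (E n 2) = E n 2 := by
  apply sRefl_fix
  rw [inner_E_alphaB (by omega) (by omega) (by omega) hj2]
  by_cases h : j = n
  · rw [if_pos h, if_neg (by omega)]
  · rw [if_neg h, if_neg (by omega), if_neg (by omega)]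
    norm_num

private lemma sB_one_swap {n : ℕ} (hn : 2 ≤ n) :
    sB n 1 (E n 1) = E n 2 ∧ sB n 1 (E n 2) = E n 1 := by
  have hd : ⟪alphaB n 1, alphaB n 1⟫_ℝ = 2 := by
    rw [alphaB_inner_self (le_refl 1) (by omega), if_neg (by omega)]
  have h1 : ⟪E n 1, alphaB n 1⟫_ℝ = 1 := by
    rw [inner_E_alphaB (le_refl 1) (by omega) (le_refl 1) (by omega), if_neg (by omega),
      if_pos rfl, if_neg (by omega)]
    norm_num
  have h2 : ⟪E n 2, alphaB n 1⟫_ℝ = -1 := by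
    rw [inner_E_alphaB (by omega) (by omega) (le_refl 1) (by omega), if_neg (by omega),
      if_neg (by omega), if_pos rfl]
    norm_num
  have ha : alphaB n 1 = E n 1 - E n 2 := by rw [alphaB, if_neg (by omega)]
  constructor
  · rw [sB, sRefl_apply, h1, hd, ha]
    have : (2 * (1 : ℝ) / 2) = 1 := by norm_num
    rw [this]
    module
  · rw [sB, sRefl_apply, h2, hd, ha]
    have : (2 * (-1 : ℝ) / 2) = -1 := by norm_num
    rw [this]
    module

private lemma prod_fix {V : Type*} (L : List (Equiv.Perm V)) (x : V)
    (h : ∀ s ∈ L, s x = x) : L.prod x = x := by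
  induction L with
  | nil => rfl
  | cons a t ih =>
      rw [List.prod_cons, Equiv.Perm.mul_apply,
        ih (fun s hs => h s (List.mem_cons_of_mem _ hs)), h a List.mem_cons_self]

private lemma L1_prod {n : ℕ} : ∀ m, m ≤ n - 1 →
    (((List.range m).map fun k => sB n (k + 1)).prod (E n (m + 1)) = E n 1) := by
  intro m
  induction m with
  | zero => intro _; rfl
  | succ m ih =>
      intro hm
      rw [List.range_succ, List.map_append, List.prod_append, Equiv.Perm.mul_apply]
      simp only [List.map_cons, List.map_nil, List.prod_cons, List.prod_nil, mul_one]
      rw [show sB n (m + 1) (E n (m + 1 + 1)) = E n (m + 1) from sB_step (by omega) (by omega)]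
      exact ih (by omega)

private lemma vB_apply {n : ℕ} (hn : 2 ≤ n) : vB n (alphaB n n) = E n 1 := by
  rw [vB, List.prod_append, Equiv.Perm.mul_apply]
  have h0 : alphaB n n = E n n := by rw [alphaB, if_pos rfl]
  have h1 : ((List.range (n - 1)).map fun k => sB n (k + 1)).prod (alphaB n n) = E n 1 := by
    have := L1_prod (n := n) (n - 1) le_rfl
    rw [show (n - 1) + 1 = n by omega] at this
    rw [h0]
    exact this
  rw [h1]
  apply prod_fix
  intro s hs
  simp only [List.mem_map, List.mem_range] at hs
  obtain ⟨k, hk, rfl⟩ := hs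
  exact sB_fix_E1 hn (by omega) (by omega)

private lemma perm_apply_inv_self {V : Type*} (f : Equiv.Perm V) (x : V) :
    f (f⁻¹ x) = x :=
  Equiv.apply_symm_apply f x

private lemma closure_struct {n : ℕ} (hn : 2 ≤ n)
    {S : Set (Equiv.Perm (EuclideanSpace ℝ (Fin n)))}
    (hS : ∀ g ∈ S, ∃ j, 1 ≤ j ∧ j ≤ n ∧ j ≠ 2 ∧ g = sB n j)
    {u : Equiv.Perm (EuclideanSpace ℝ (Fin n))} (hu : u ∈ Subgroup.closure S) :
    (∀ x y, u (x - y) = u x - u y) ∧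
      ((u (E n 1) = E n 1 ∧ u (E n 2) = E n 2) ∨
        (u (E n 1) = E n 2 ∧ u (E n 2) = E n 1)) := by
  induction hu using Subgroup.closure_induction with
  | mem g hg =>
      obtain ⟨j, hj1, hj2, hj2', rfl⟩ := hS g hg
      refine ⟨fun x y => sRefl_sub _ x y, ?_⟩
      by_cases h1 : j = 1
      · subst h1; exact Or.inr (sB_one_swap hn)
      · exact Or.inl ⟨sB_fix_E1 hn (by omega) hj2, sB_fix_E2 (by omega) hj2⟩
  | one => exact ⟨fun x y => rfl, Or.inl ⟨rfl, rfl⟩⟩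
  | mul a b _ _ ha hb =>
      obtain ⟨halin, hacase⟩ := ha
      obtain ⟨hblin, hbcase⟩ := hb
      refine ⟨fun x y => by
        rw [Equiv.Perm.mul_apply, Equiv.Perm.mul_apply, Equiv.Perm.mul_apply, hblin, halin], ?_⟩
      rcases hbcase with ⟨h1, h2⟩ | ⟨h1, h2⟩ <;> rcases hacase with ⟨h3, h4⟩ | ⟨h3, h4⟩
      · exact Or.inl ⟨by rw [Equiv.Perm.mul_apply, h1, h3], by rw [Equiv.Perm.mul_apply, h2, h4]⟩
      · exact Or.inr ⟨by rw [Equiv.Perm.mul_apply, h1, h3], by rw [Equiv.Perm.mul_apply, h2, h4]⟩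
      · exact Or.inr ⟨by rw [Equiv.Perm.mul_apply, h1, h4], by rw [Equiv.Perm.mul_apply, h2, h3]⟩
      · exact Or.inl ⟨by rw [Equiv.Perm.mul_apply, h1, h4], by rw [Equiv.Perm.mul_apply, h2, h3]⟩
  | inv a _ ha =>
      obtain ⟨halin, hacase⟩ := ha
      constructor
      · intro x y
        apply a.injective
        rw [perm_apply_inv_self, halin, perm_apply_inv_self,
          perm_apply_inv_self]
      · rcases hacase with ⟨h1, h2⟩ | ⟨h1, h2⟩
        · exact Or.inl ⟨a.injective (by rw [perm_apply_inv_self, h1]),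
            a.injective (by rw [perm_apply_inv_self, h2])⟩
        · exact Or.inr ⟨a.injective (by rw [perm_apply_inv_self, h2]),
            a.injective (by rw [perm_apply_inv_self, h1])⟩

private lemma isPos_inner_nonneg {n : ℕ} (hn : 2 ≤ n) {x : EuclideanSpace ℝ (Fin n)}
    (h : IsPosB n x) : 0 ≤ ⟪E n 1, x⟫_ℝ := by
  obtain ⟨-, c, rfl⟩ := h
  rw [inner_sum]
  apply Finset.sum_nonneg
  intro j hj
  rw [Finset.mem_Icc] at hj
  rw [real_inner_smul_right, inner_E_alphaB (le_refl 1) (by omega) hj.1 hj.2]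
  have hnn : (0:ℝ) ≤ (if j = n then (if 1 = n then (1:ℝ) else 0)
      else (if 1 = j then 1 else 0) - (if 1 = j + 1 then 1 else 0)) := by
    have hj1 : ¬ (1 = j + 1) := by omega
    split_ifs <;> norm_num
  exact mul_nonneg (Nat.cast_nonneg _) hnn

private lemma not_isNegB_alphaB_one {n : ℕ} (hn : 2 ≤ n) : ¬ IsNegB n (alphaB n 1) := by
  intro h
  have h0 := isPos_inner_nonneg hn h
  rw [inner_neg_right, alphaB, if_neg (by omega), inner_sub_right,
    E_inner (le_refl 1) (by omega) (le_refl 1) (by omega),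
    E_inner (le_refl 1) (by omega) (by omega) (by omega),
    if_pos rfl, if_neg (by omega)] at h0
  norm_num at h0

private lemma longest_swaps {n : ℕ} (hn : 2 ≤ n)
    {S : Set (Equiv.Perm (EuclideanSpace ℝ (Fin n)))}
    (hS : ∀ g ∈ S, ∃ j, 1 ≤ j ∧ j ≤ n ∧ j ≠ 2 ∧ g = sB n j)
    {u : Equiv.Perm (EuclideanSpace ℝ (Fin n))} (hu : u ∈ Subgroup.closure S)
    (hneg1 : IsNegB n (u (alphaB n 1))) :
    u (E n 1) = E n 2 ∧ u (E n 2) = E n 1 := by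
  obtain ⟨hlin, hcase⟩ := closure_struct hn hS hu
  have ha : alphaB n 1 = E n 1 - E n 2 := by rw [alphaB, if_neg (by omega)]
  rcases hcase with ⟨h1, h2⟩ | h
  · exfalso
    apply not_isNegB_alphaB_one hn
    have : u (alphaB n 1) = alphaB n 1 := by rw [ha, hlin, h1, h2]
    rwa [this] at hneg1
  · exact h

private lemma sum_alphaB {n : ℕ} (hn : 1 ≤ n) :
    ∑ i ∈ Finset.Icc 1 n, alphaB n i = E n 1 := by
  rw [← Finset.Ico_add_one_right_eq_Icc, Finset.sum_Ico_eq_sum_range]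
  have h1 : n + 1 - 1 = (n - 1) + 1 := by omega
  rw [h1, Finset.sum_range_succ]
  have h2 : ∀ k ∈ Finset.range (n - 1),
      alphaB n (1 + k) = (fun k => E n (k + 1)) k - (fun k => E n (k + 1)) (k + 1) := by
    intro k hk
    simp only [Finset.mem_range] at hk
    simp only []
    rw [alphaB, if_neg (by omega), show 1 + k = k + 1 by omega, show k + 1 + 1 = k + 2 by omega]
  rw [Finset.sum_congr rfl h2, Finset.sum_range_sub' (fun k => E n (k + 1)) (n - 1)]
  have h3 : alphaB n (1 + (n - 1)) = E n n := by rw [alphaB, if_pos (by omega)]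
  rw [h3, show (n - 1) + 1 = n by omega]
  show E n (0 + 1) - E n n + E n n = E n 1
  rw [sub_add_cancel]

end Aux

/-- Type `Bₙ` (`n ≥ 2`), `2 ≤ i ≤ n`: let `v = s₂ ∘ ⋯ ∘ sₙ ∘ s₁ ∘ ⋯ ∘ sₙ₋₁`, let `u` be the
longest element of the parabolic Weyl group generated by `{sⱼ : j ≠ 2}` and let `u'` be the
longest element of the parabolic Weyl group generated by `{sⱼ : j ∉ {2, i}}`.  Then
`wᵢ = u' ∘ u ∘ v` sends `αₙ` to a positive root which is not simple. -/
theorem stmt_9 (n : ℕ) (hn : 2 ≤ n) (i : ℕ) (hi1 : 2 ≤ i) (hi2 : i ≤ n)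
    (u : Equiv.Perm (EuclideanSpace ℝ (Fin n)))
    (hu : u ∈ Subgroup.closure {g | ∃ j, 1 ≤ j ∧ j ≤ n ∧ j ≠ 2 ∧ g = sB n j})
    (hneg : ∀ j, 1 ≤ j → j ≤ n → j ≠ 2 → IsNegB n (u (alphaB n j)))
    (u' : Equiv.Perm (EuclideanSpace ℝ (Fin n)))
    (hu' : u' ∈ Subgroup.closure {g | ∃ j, 1 ≤ j ∧ j ≤ n ∧ j ≠ 2 ∧ j ≠ i ∧ g = sB n j})
    (hneg' : ∀ j, 1 ≤ j → j ≤ n → j ≠ 2 → j ≠ i → IsNegB n (u' (alphaB n j))) :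
    IsPosB n ((u' * u * vB n) (alphaB n n)) ∧
    ∀ j, 1 ≤ j → j ≤ n → (u' * u * vB n) (alphaB n n) ≠ alphaB n j := by
  have h1 : 1 ≤ n := by omega
  have husw := longest_swaps hn
    (by rintro g ⟨j, hj1, hj2, hj3, rfl⟩; exact ⟨j, hj1, hj2, hj3, rfl⟩) hu
    (hneg 1 (le_refl 1) (by omega) (by omega))
  have husw' := longest_swaps hn
    (by rintro g ⟨j, hj1, hj2, hj3, hj4, rfl⟩; exact ⟨j, hj1, hj2, hj3, rfl⟩) hu'
    (hneg' 1 (le_refl 1) (by omega) (by omega) (by omega))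
  have key : (u' * u * vB n) (alphaB n n) = E n 1 := by
    rw [Equiv.Perm.mul_apply, Equiv.Perm.mul_apply, vB_apply hn, husw.1, husw'.2]
  rw [key]
  constructor
  · refine ⟨Or.inr ⟨1, le_refl 1, by omega, Or.inl rfl⟩, fun _ => 1, ?_⟩
    simp only [Nat.cast_one, one_smul]
    exact (sum_alphaB h1).symm
  · intro j hj1 hj2 h
    by_cases hjn : j = n
    · have h2 := congrArg (fun x => ⟪E n 1, x⟫_ℝ) h
      rw [E_inner (le_refl 1) h1 (le_refl 1) h1, if_pos rfl,
        inner_E_alphaB (le_refl 1) h1 hj1 hj2, if_pos hjn, if_neg (by omega)] at h2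
      exact one_ne_zero h2
    · have h2 := congrArg (fun x => ⟪E n (j + 1), x⟫_ℝ) h
      rw [E_inner (by omega) (by omega) (le_refl 1) h1, if_neg (by omega),
        inner_E_alphaB (by omega) (by omega) hj1 hj2, if_neg hjn,
        if_neg (by omega), if_pos rfl] at h2
      norm_num at h2
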